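/- Let N ≥ 1, let Δx > 0, Δt > 0, m ∈ ℝ, and let p ≥ 2 be an integer. Let φ, ψ, φ', ψ' : ZMod N → ℝ satisfy, for every k ∈ ZMod N: (i) φ'(k) - φ(k) = (Δt/2)(ψ'(k) + ψ(k)); (ii) (ψ'(k) - ψ(k))(φ'(k) - φ(k)) = Δt [ -(m²/2)(φ'(k)² - φ(k)²) - (1/(p+1))(|φ'(k)|^{p+1} - |φ(k)|^{p+1}) + (1/2) · ((φ'+φ)(k+1) - 2(φ'+φ)(k) + (φ'+φ)(k-1))/(Δx²) · (φ'(k) - φ(k)) ]. Define the discrete total Hamiltonian H^{II}(u,v) = Δx · Σ_{k ∈ ZMod N} [ (1/2) v(k)² + (m²/2) u(k)² + (1/(p+1)) |u(k)|^{p+1} + (1/4) ( ((u(k+1) - u(k))/Δx)² + ((u(k) - u(k-1))/Δx)² ) ]. Then H^{II}(φ', ψ') = H^{II}(φ, ψ). -/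
import Mathlib


/-- The discrete total Hamiltonian of the Form II scheme (one space dimension,
`N`-periodic grid, flat case `H = 0`). -/
noncomputable def formIIHamiltonian (N : ℕ) [NeZero N] (Δx m : ℝ) (p : ℕ)
    (u v : ZMod N → ℝ) : ℝ :=
  Δx * ∑ k : ZMod N,
    ((1 / 2) * v k ^ 2 + (m ^ 2 / 2) * u k ^ 2
      + (1 / ((p : ℝ) + 1)) * |u k| ^ (p + 1)
      + (1 / 4) * (((u (k + 1) - u k) / Δx) ^ 2 + ((u k - u (k - 1)) / Δx) ^ 2))

private lemma zmod_sum_shift (N : ℕ) [NeZero N] (f : ZMod N → ℝ) (a : ZMod N) :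
    ∑ k : ZMod N, f (k + a) = ∑ k : ZMod N, f k :=
  Fintype.sum_equiv (Equiv.addRight a) (fun k => f (k + a)) f (fun _ => rfl)

private lemma zmod_sum_tele (N : ℕ) [NeZero N] (f : ZMod N → ℝ) :
    ∑ k : ZMod N, (f (k + 1) - f k) = 0 := by
  rw [Finset.sum_sub_distrib, zmod_sum_shift, sub_self]

private lemma zmod_sum_tele' (N : ℕ) [NeZero N] (f : ZMod N → ℝ) :
    ∑ k : ZMod N, (f k - f (k - 1)) = 0 := by
  have h := zmod_sum_shift N f (-1)
  simp only [← sub_eq_add_neg] at h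
  rw [Finset.sum_sub_distrib, h, sub_self]

/-- Discrete energy conservation of the Form II scheme: one step of the scheme
preserves the discrete total Hamiltonian. -/
theorem formII_energy_conservation (N : ℕ) [NeZero N] (hN : 1 ≤ N)
    (Δx Δt m : ℝ) (hΔx : 0 < Δx) (hΔt : 0 < Δt) (p : ℕ) (hp : 2 ≤ p)
    (φ ψ φ' ψ' : ZMod N → ℝ)
    (h1 : ∀ k : ZMod N, φ' k - φ k = (Δt / 2) * (ψ' k + ψ k))
    (h2 : ∀ k : ZMod N,
      (ψ' k - ψ k) * (φ' k - φ k)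
        = Δt * (-(m ^ 2 / 2) * (φ' k ^ 2 - φ k ^ 2)
            - (1 / ((p : ℝ) + 1)) * (|φ' k| ^ (p + 1) - |φ k| ^ (p + 1))
            + (1 / 2)
              * (((φ' + φ) (k + 1) - 2 * (φ' + φ) k + (φ' + φ) (k - 1)) / Δx ^ 2)
              * (φ' k - φ k))) :
    formIIHamiltonian N Δx m p φ' ψ' = formIIHamiltonian N Δx m p φ ψ := by
  have hΔt' : Δt ≠ 0 := ne_of_gt hΔt
  have hΔx' : Δx ≠ 0 := ne_of_gt hΔx
  set u : ZMod N → ℝ := fun k => φ' k + φ k with hu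
  set w : ZMod N → ℝ := fun k => φ' k - φ k with hw
  -- key pointwise identity from the scheme
  have key : ∀ k : ZMod N,
      (1 / 2) * ψ' k ^ 2 + (m ^ 2 / 2) * φ' k ^ 2
        + (1 / ((p : ℝ) + 1)) * |φ' k| ^ (p + 1)
        - ((1 / 2) * ψ k ^ 2 + (m ^ 2 / 2) * φ k ^ 2
          + (1 / ((p : ℝ) + 1)) * |φ k| ^ (p + 1))
      = (1 / 2) * ((u (k + 1) - 2 * u k + u (k - 1)) / Δx ^ 2) * w k := by
    intro k
    have h2k := h2 k
    simp only [Pi.add_apply] at h2k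
    have h1k := h1 k
    apply mul_left_cancel₀ hΔt'
    simp only [hu, hw]
    linear_combination h2k - (ψ' k - ψ k) * h1k
  -- reduce to showing the sum of the pointwise differences vanishes
  unfold formIIHamiltonian
  rw [← sub_eq_zero, ← mul_sub, ← Finset.sum_sub_distrib]
  have hzero : ∑ k : ZMod N,
      (((1 / 2) * ψ' k ^ 2 + (m ^ 2 / 2) * φ' k ^ 2
          + (1 / ((p : ℝ) + 1)) * |φ' k| ^ (p + 1)
          + (1 / 4) * (((φ' (k + 1) - φ' k) / Δx) ^ 2 + ((φ' k - φ' (k - 1)) / Δx) ^ 2))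
        - ((1 / 2) * ψ k ^ 2 + (m ^ 2 / 2) * φ k ^ 2
          + (1 / ((p : ℝ) + 1)) * |φ k| ^ (p + 1)
          + (1 / 4) * (((φ (k + 1) - φ k) / Δx) ^ 2 + ((φ k - φ (k - 1)) / Δx) ^ 2))) = 0 := by
    have hD : ∀ k : ZMod N,
        (((1 / 2) * ψ' k ^ 2 + (m ^ 2 / 2) * φ' k ^ 2
            + (1 / ((p : ℝ) + 1)) * |φ' k| ^ (p + 1)
            + (1 / 4) * (((φ' (k + 1) - φ' k) / Δx) ^ 2 + ((φ' k - φ' (k - 1)) / Δx) ^ 2))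
          - ((1 / 2) * ψ k ^ 2 + (m ^ 2 / 2) * φ k ^ 2
            + (1 / ((p : ℝ) + 1)) * |φ k| ^ (p + 1)
            + (1 / 4) * (((φ (k + 1) - φ k) / Δx) ^ 2 + ((φ k - φ (k - 1)) / Δx) ^ 2)))
        = (1 / (2 * Δx ^ 2)) *
            ((u (k + 1) - 2 * u k + u (k - 1)) * w k
              + (u (k + 1) - u k) * (w (k + 1) - w k))
          + (1 / (4 * Δx ^ 2)) *
            ((u k - u (k - 1)) * (w k - w (k - 1))
              - (u (k + 1) - u k) * (w (k + 1) - w k)) := by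
      intro k
      have hk := key k
      simp only [hu, hw] at hk ⊢
      linear_combination hk
    calc _ = ∑ k : ZMod N,
        ((1 / (2 * Δx ^ 2)) *
            ((u (k + 1) - 2 * u k + u (k - 1)) * w k
              + (u (k + 1) - u k) * (w (k + 1) - w k))
          + (1 / (4 * Δx ^ 2)) *
            ((u k - u (k - 1)) * (w k - w (k - 1))
              - (u (k + 1) - u k) * (w (k + 1) - w k))) := Finset.sum_congr rfl (fun k _ => hD k)
      _ = 0 := by
        rw [Finset.sum_add_distrib, ← Finset.mul_sum, ← Finset.mul_sum]
        have t1 : ∑ k : ZMod N, (u (k + 1) * w (k + 1) - u k * w k) = 0 :=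
          zmod_sum_tele N (fun j => u j * w j)
        have t2 : ∑ k : ZMod N, (u k * w (k + 1) - u (k - 1) * w (k - 1 + 1)) = 0 :=
          zmod_sum_tele' N (fun j => u j * w (j + 1))
        simp only [sub_add_cancel] at t2
        have t3 : ∑ k : ZMod N,
            ((u (k + 1) - u k) * (w (k + 1) - w k)
              - (u (k - 1 + 1) - u (k - 1)) * (w (k - 1 + 1) - w (k - 1))) = 0 :=
          zmod_sum_tele' N (fun j => (u (j + 1) - u j) * (w (j + 1) - w j))
        simp only [sub_add_cancel] at t3
        have hA : ∑ k : ZMod N,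
            ((u (k + 1) - 2 * u k + u (k - 1)) * w k
              + (u (k + 1) - u k) * (w (k + 1) - w k)) = 0 := by
          have : ∑ k : ZMod N,
              ((u (k + 1) - 2 * u k + u (k - 1)) * w k
                + (u (k + 1) - u k) * (w (k + 1) - w k))
              = ∑ k : ZMod N,
                ((u (k + 1) * w (k + 1) - u k * w k)
                  - (u k * w (k + 1) - u (k - 1) * w k)) := by
            exact Finset.sum_congr rfl (fun k _ => by ring)
          rw [this, Finset.sum_sub_distrib, t1, t2, sub_self]
        have hB : ∑ k : ZMod N,
            ((u k - u (k - 1)) * (w k - w (k - 1))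
              - (u (k + 1) - u k) * (w (k + 1) - w k)) = 0 := by
          rw [Finset.sum_sub_distrib] at t3 ⊢
          linarith
        rw [hA, hB, mul_zero, mul_zero, add_zero]
  rw [hzero, mul_zero]
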